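/- arXiv:1512.06202 — 3 statements merged into one kernel-verified Lean document; each statement's English description precedes it below -/
import Mathlib

section
/- Let G be a K₅-free graph on n vertices with e edges. Then τ_B(G) ≤ n²/4 − e/3. -/
open SimpleGraph Finset

variable {V : Type*} [Fintype V] [DecidableEq V]

/-- `A` is a triangle-independent edge set of `G`: a set of edges of `G`
containing at most one edge from each triangle of `G`. -/
def IsTriangleIndep (G : SimpleGraph V) (A : Finset (Sym2 V)) : Prop :=
  (A : Set (Sym2 V)) ⊆ G.edgeSet ∧
    ∀ a b c : V, G.Adj a b → G.Adj b c → G.Adj a c →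
      ({s(a, b), s(b, c), s(a, c)} ∩ A).card ≤ 1

/-- `α₁(G)`: the maximum size of a triangle-independent set in `G`. -/
noncomputable def alphaOne (G : SimpleGraph V) : ℕ :=
  sSup {k | ∃ A : Finset (Sym2 V), IsTriangleIndep G A ∧ A.card = k}

/-- `τ_B(G)`: the minimum size of an edge set of `G` whose deletion makes `G` bipartite. -/
noncomputable def tauB (G : SimpleGraph V) : ℕ :=
  sInf {k | ∃ D : Finset (Sym2 V), (D : Set (Sym2 V)) ⊆ G.edgeSet ∧
    (G.deleteEdges (D : Set (Sym2 V))).Colorable 2 ∧ D.card = k}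

/-- `b(G)`: the maximum size of a vertex set inducing a bipartite subgraph of `G`. -/
noncomputable def bipNum (G : SimpleGraph V) : ℕ :=
  sSup {k | ∃ B : Finset V, (G.induce (B : Set V)).Colorable 2 ∧ B.card = k}

/-
A `K₅`-free graph has a 4-colouring with at most `3n²/8 - e` monochromatic edges: for a
`K_{r+1}`-free graph, make the non-neighbours of a vertex of maximum degree one colour class and
recurse into its neighbourhood, which is `K_r`-free; the maximality of the degree bounds the edges
leaving the new class, and `(1 - 1/r) n²/2 - e` propagates. Of the three ways of merging four
colours into two pairs, the best leaves at most `(e + 2·mono)/3 ≤ n²/4 - e/3` monochromatic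
edges, and deleting those leaves a bipartite graph. Edges are counted as ordered pairs
(`interedges`), i.e. twice.
-/

lemma one_sub_inv_mul_sq_add_two_mul_le {r : ℝ} (hr : 0 < r) (a d : ℝ) :
    (1 - r⁻¹) * d ^ 2 + 2 * ((a - d) * d) ≤ (1 - (r + 1)⁻¹) * a ^ 2 := by
  have h : (1 - (r + 1)⁻¹) * a ^ 2 - ((1 - r⁻¹) * d ^ 2 + 2 * ((a - d) * d))
      = (r * a - (r + 1) * d) ^ 2 / (r * (r + 1)) := by
    field_simp
    ring
  have : 0 ≤ (r * a - (r + 1) * d) ^ 2 / (r * (r + 1)) := by positivity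
  linarith

/-- The three ways of merging four colours into two pairs of colours. -/
def pairingsOfFour : Fin 3 → Fin 4 → Fin 2 := ![![0, 0, 1, 1], ![0, 1, 0, 1], ![0, 1, 1, 0]]

lemma sum_pairingsOfFour_eq (i j : Fin 4) :
    ∑ k, (if pairingsOfFour k i = pairingsOfFour k j then 1 else 0)
      = 1 + 2 * (if i = j then 1 else 0) := by
  revert i j
  decide

namespace SimpleGraph

variable {α β : Type*} (G : SimpleGraph α)

def monochromatic (c : α → β) : SimpleGraph α where
  Adj a b := G.Adj a b ∧ c a = c b
  symm := ⟨fun _ _ h => ⟨h.1.symm, h.2.symm⟩⟩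
  loopless := ⟨fun a h => G.loopless.irrefl a h.1⟩

@[simp] lemma monochromatic_adj {c : α → β} {a b : α} :
    (G.monochromatic c).Adj a b ↔ G.Adj a b ∧ c a = c b := Iff.rfl

lemma monochromatic_le (c : α → β) : G.monochromatic c ≤ G := fun _ _ h => h.1

instance [DecidableRel G.Adj] [DecidableEq β] (c : α → β) :
    DecidableRel (G.monochromatic c).Adj :=
  fun a b => inferInstanceAs (Decidable (G.Adj a b ∧ c a = c b))

lemma colorable_deleteEdges_monochromatic {n : ℕ} (c : α → Fin n) :
    (G.deleteEdges (G.monochromatic c).edgeSet).Colorable n :=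
  ⟨Coloring.mk c fun hab hc => (deleteEdges_adj.1 hab).2 ⟨(deleteEdges_adj.1 hab).1, hc⟩⟩

variable [DecidableRel G.Adj]

lemma interedges_monochromatic [DecidableEq β] (c : α → β) (s t : Finset α) :
    (G.monochromatic c).interedges s t = {p ∈ G.interedges s t | c p.1 = c p.2} := by
  ext p
  simp [mem_interedges_iff, and_assoc]

section DecidableEq

variable [DecidableEq α] {s s' t t' : Finset α}

lemma card_interedges_union_left (h : Disjoint s s') (t : Finset α) :
    #(G.interedges (s ∪ s') t) = #(G.interedges s t) + #(G.interedges s' t) := by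
  rw [← card_union_of_disjoint (G.interedges_disjoint_left h t)]
  congr 1
  ext p
  simp only [mem_interedges_iff, mem_union]
  tauto

lemma card_interedges_union_right (s : Finset α) (h : Disjoint t t') :
    #(G.interedges s (t ∪ t')) = #(G.interedges s t) + #(G.interedges s t') := by
  rw [← card_union_of_disjoint (G.interedges_disjoint_right s h)]
  congr 1
  ext p
  simp only [mem_interedges_iff, mem_union]
  tauto

lemma card_interedges_eq_sum (s t : Finset α) :
    #(G.interedges s t) = ∑ u ∈ s, #{w ∈ t | G.Adj u w} := by
  rw [interedges, Rel.interedges_eq_biUnion, card_biUnion]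
  · simp
  · intro x _ y _ hxy
    rw [Function.onFun, Finset.disjoint_left]
    simp only [mem_map, Function.Embedding.coeFn_mk]
    rintro _ ⟨a, -, rfl⟩ ⟨b, -, h⟩
    exact hxy (congrArg Prod.fst h).symm

lemma card_interedges_le_mul_of_degree_le {d : ℕ} (h : ∀ u ∈ s, #{w ∈ t | G.Adj u w} ≤ d) :
    #(G.interedges s t) ≤ #s * d := by
  rw [card_interedges_eq_sum, ← smul_eq_mul, ← sum_const]
  exact sum_le_sum h

lemma card_interedges_monochromatic_extend {r : ℕ} (c : α → Fin r) {N M : Finset α}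
    (h : Disjoint N M) :
    #((G.monochromatic fun u => if u ∈ N then (c u).succ else 0).interedges (N ∪ M) (N ∪ M))
      = #((G.monochromatic c).interedges N N) + #(G.interedges M M) := by
  rw [← card_union_of_disjoint]
  · congr 1
    ext ⟨x, y⟩
    have hx : x ∈ N → x ∉ M := fun hx => Finset.disjoint_left.1 h hx
    have hy : y ∈ N → y ∉ M := fun hy => Finset.disjoint_left.1 h hy
    by_cases hxN : x ∈ N <;> by_cases hyN : y ∈ N <;>
      simp [mem_interedges_iff, hxN, hyN, hx, hy, Fin.succ_ne_zero, (Fin.succ_ne_zero _).symm]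
  · exact Finset.disjoint_left.2 fun p hp hp' =>
      Finset.disjoint_left.1 h ((mem_interedges_iff _).1 hp).1 ((mem_interedges_iff _).1 hp').1

theorem exists_coloring_card_interedges_monochromatic_le {r : ℕ} (hr : 0 < r) (s : Finset α)
    (hs : G.CliqueFreeOn s (r + 1)) :
    ∃ c : α → Fin r, (#((G.monochromatic c).interedges s s) + #(G.interedges s s) : ℝ)
      ≤ (1 - (r : ℝ)⁻¹) * #s ^ 2 := by
  induction r, hr using Nat.le_induction generalizing s with
  | base =>
    have hempty : G.interedges s s = ∅ := by
      refine eq_empty_of_forall_notMem fun p hp => ?_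
      obtain ⟨h1, h2, hadj⟩ := (mem_interedges_iff _).1 hp
      exact (G.cliqueFreeOn_two.1 hs) h1 h2 hadj.ne hadj
    refine ⟨0, ?_⟩
    rw [interedges_monochromatic, hempty]
    simp
  | succ r hr ih =>
    obtain rfl | hne := s.eq_empty_or_nonempty
    · exact ⟨0, by simp [interedges]⟩
    obtain ⟨v, hv, hmax⟩ := s.exists_max_image (fun u => #{w ∈ s | G.Adj u w}) hne
    set N := {w ∈ s | G.Adj v w}
    set M := {w ∈ s | ¬G.Adj v w}
    have hNM : Disjoint N M := disjoint_filter_filter_not s s _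
    have hs_eq : N ∪ M = s := filter_union_filter_not_eq _ s
    have hN : G.CliqueFreeOn N (r + 1) :=
      CliqueFreeOn.subset _ (fun w hw => by simpa [N] using hw) (hs.of_succ _ hv)
    obtain ⟨c, hc⟩ := ih N hN
    refine ⟨fun u => if u ∈ N then (c u).succ else 0, ?_⟩
    have hmono := G.card_interedges_monochromatic_extend c hNM
    have hall : #(G.interedges s s) = #(G.interedges N N) + 2 * #(G.interedges M N)
        + #(G.interedges M M) := by
      have hsymm : #(G.interedges N M) = #(G.interedges M N) :=
        @Rel.card_interedges_comm _ G.Adj _ G.symm N M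
      rw [← hs_eq, card_interedges_union_left _ hNM, card_interedges_union_right _ _ hNM,
        card_interedges_union_right _ _ hNM, hsymm]
      ring
    have hdeg : #(G.interedges M N) + #(G.interedges M M) ≤ #M * #N := by
      rw [← card_interedges_union_right _ _ hNM, hs_eq]
      exact G.card_interedges_le_mul_of_degree_le fun u hu => hmax u (filter_subset _ s hu)
    have hcard : #N + #M = #s := by rw [← card_union_of_disjoint hNM, hs_eq]
    rw [← hs_eq, hmono, hs_eq, hall, ← hcard]
    have hdegR : (#(G.interedges M N) + #(G.interedges M M) : ℝ) ≤ #M * #N := by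
      exact_mod_cast hdeg
    have := one_sub_inv_mul_sq_add_two_mul_le (r := r) (by positivity) (#N + #M) #N
    push_cast at hc this ⊢
    linarith

end DecidableEq

lemma exists_two_coloring_card_interedges_monochromatic_le (c : α → Fin 4) (s t : Finset α) :
    ∃ c' : α → Fin 2, 3 * #((G.monochromatic c').interedges s t)
      ≤ #(G.interedges s t) + 2 * #((G.monochromatic c).interedges s t) := by
  have hsum : ∑ k, #((G.monochromatic (pairingsOfFour k ∘ c)).interedges s t)
      = #(G.interedges s t) + 2 * #((G.monochromatic c).interedges s t) := by
    simp only [interedges_monochromatic, card_filter, Function.comp_apply]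
    rw [sum_comm, card_eq_sum_ones, mul_sum, ← sum_add_distrib]
    exact sum_congr rfl fun p _ => sum_pairingsOfFour_eq (c p.1) (c p.2)
  obtain ⟨k, -, hk⟩ := exists_le_of_sum_le univ_nonempty
    (f := fun k => 3 * #((G.monochromatic (pairingsOfFour k ∘ c)).interedges s t))
    (g := fun _ => #(G.interedges s t) + 2 * #((G.monochromatic c).interedges s t))
    (by simp [← mul_sum, hsum])
  exact ⟨pairingsOfFour k ∘ c, hk⟩

section Fintype

variable [Fintype α]

lemma two_mul_card_edgeFinset_eq_card_interedges :
    2 * #G.edgeFinset = #(G.interedges univ univ) := by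
  rw [two_mul_card_edgeFinset, interedges_def, univ_product_univ]

lemma tauB_le_card_edgeFinset_monochromatic (c : α → Fin 2) :
    tauB G ≤ #(G.monochromatic c).edgeFinset :=
  Nat.sInf_le ⟨_, by simpa using edgeSet_mono (G.monochromatic_le c),
    by simpa using G.colorable_deleteEdges_monochromatic c, rfl⟩

end Fintype

end SimpleGraph

/-- For every `K₅`-free graph `G` on `n` vertices with `e` edges, `τ_B(G) ≤ n²/4 - e/3`. -/
theorem tauB_le_of_cliqueFree_five (G : SimpleGraph V) [DecidableRel G.Adj]
    (h5 : G.CliqueFree 5) :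
    (tauB G : ℝ) ≤ (Fintype.card V : ℝ) ^ 2 / 4 - (G.edgeFinset.card : ℝ) / 3 := by
  obtain ⟨c, hc⟩ :=
    G.exists_coloring_card_interedges_monochromatic_le (r := 4) (by norm_num) univ h5.cliqueFreeOn
  obtain ⟨c', hc'⟩ := G.exists_two_coloring_card_interedges_monochromatic_le c univ univ
  have hc'R : (3 * #((G.monochromatic c').interedges univ univ) : ℝ)
      ≤ #(G.interedges univ univ) + 2 * #((G.monochromatic c).interedges univ univ) :=
    mod_cast hc'
  have htau : (tauB G : ℝ) ≤ #(G.monochromatic c').edgeFinset :=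
    mod_cast G.tauB_le_card_edgeFinset_monochromatic c'
  have hG : (2 * #G.edgeFinset : ℝ) = #(G.interedges univ univ) :=
    mod_cast G.two_mul_card_edgeFinset_eq_card_interedges
  have hG' : (2 * #(G.monochromatic c').edgeFinset : ℝ)
      = #((G.monochromatic c').interedges univ univ) :=
    mod_cast (G.monochromatic c').two_mul_card_edgeFinset_eq_card_interedges
  rw [card_univ] at hc
  norm_num at hc
  linarith
end

section
/- For every K₆-free graph G on n vertices, τ_B(G) ≤ 17n²/100. -/
set_option maxRecDepth 100000
set_option maxHeartbeats 1600000

open SimpleGraph Finset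

variable {V : Type*} [Fintype V] [DecidableEq V]

namespace TauBAux

/-! ### Configurations for the merging scheme -/

def CFG : Finset (Fin 5 × Fin 5 × Fin 5 × Bool) :=
  Finset.univ.filter fun c => c.1 ≠ c.2.1 ∧ c.1 ≠ c.2.2.1 ∧ c.2.1 ≠ c.2.2.1

def hfun (c : Fin 5 × Fin 5 × Fin 5 × Bool) (k : Fin 5 × Bool) : Bool :=
  if k.1 = c.2.1 ∨ k.1 = c.2.2.1 then true
  else if k.1 = c.1 then xor k.2 c.2.2.2 else false

def W (k k' : Fin 5 × Bool) : ℕ := (CFG.filter fun c => hfun c k = hfun c k').card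

lemma CFG_card : CFG.card = 120 := by decide

lemma CFG_nonempty : CFG.Nonempty := ⟨(0, 1, 2, false), by decide⟩

lemma W_cross' : ∀ k k' : Fin 5 × Bool, k.1 ≠ k'.1 → W k k' = 48 := by decide

lemma W_int' : ∀ a : Fin 5, ∀ s s' : Bool, W (a, s) (a, s') = if s = s' then 120 else 96 := by
  decide

/-! ### Counting definitions -/

variable (G : SimpleGraph V)

/-- Ordered count of adjacent pairs within `s` lying in the same class of `g`. -/
def badC [DecidableRel G.Adj] {β : Type*} [DecidableEq β] (s : Finset V) (g : V → β) : ℕ :=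
  ((s ×ˢ s).filter fun p => G.Adj p.1 p.2 ∧ g p.1 = g p.2).card

/-- Ordered count of adjacent pairs within `s`. -/
def adjC [DecidableRel G.Adj] (s : Finset V) : ℕ :=
  ((s ×ˢ s).filter fun p => G.Adj p.1 p.2).card

/-- Ordered count of pairs within `s` in different classes of `f` (no adjacency condition). -/
def neqC {β : Type*} [DecidableEq β] (s : Finset V) (f : V → β) : ℕ :=
  ((s ×ˢ s).filter fun p => ¬ f p.1 = f p.2).card

/-! ### Step 1: deleting the monochromatic edges of any 2-colouring makes `G` bipartite -/

lemma two_tauB_le [DecidableRel G.Adj] (g : V → Bool) :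
    2 * tauB G ≤ badC G Finset.univ g := by
  set F : Finset (V × V) :=
    (Finset.univ ×ˢ Finset.univ).filter fun p : V × V => G.Adj p.1 p.2 ∧ g p.1 = g p.2 with hF
  have hmemF : ∀ p : V × V, p ∈ F ↔ G.Adj p.1 p.2 ∧ g p.1 = g p.2 := by
    intro p; simp [hF]
  set D : Finset (Sym2 V) := F.image fun p => s(p.1, p.2) with hD
  have hτ : tauB G ≤ D.card := by
    apply Nat.sInf_le
    refine ⟨D, ?_, ?_, rfl⟩
    · intro e he
      rw [Finset.mem_coe, hD, Finset.mem_image] at he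
      obtain ⟨p, hp, rfl⟩ := he
      exact ((hmemF p).1 hp).1
    · refine ⟨SimpleGraph.Coloring.mk (fun v => if g v then (0 : Fin 2) else 1) ?_⟩
      intro u v huv
      rw [SimpleGraph.deleteEdges_adj] at huv
      obtain ⟨hadj, hne⟩ := huv
      have hgne : ¬ g u = g v := by
        intro hgu
        exact hne (Finset.mem_coe.2 (Finset.mem_image_of_mem _ ((hmemF (u, v)).2 ⟨hadj, hgu⟩)))
      cases hu : g u <;> cases hv : g v <;> simp [hu, hv] at hgne ⊢
  have h2 : 2 * D.card ≤ F.card := by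
    rw [Finset.card_eq_sum_card_image (fun p : V × V => s(p.1, p.2)) F]
    have hfib : ∀ e ∈ D, 2 ≤ (F.filter fun p : V × V => s(p.1, p.2) = e).card := by
      intro e he
      rw [hD, Finset.mem_image] at he
      obtain ⟨p, hp, rfl⟩ := he
      have hpadj := ((hmemF p).1 hp).1
      have hne : p.1 ≠ p.2 := hpadj.ne
      have hswap : p.swap ∈ F := (hmemF p.swap).2 ⟨hpadj.symm, (((hmemF p).1 hp).2).symm⟩
      have hpne : p ≠ p.swap := by
        intro h
        exact hne (congrArg Prod.fst h)
      have hsub : ({p, p.swap} : Finset (V × V)) ⊆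
          F.filter fun q : V × V => s(q.1, q.2) = s(p.1, p.2) := by
        intro q hq
        rcases Finset.mem_insert.1 hq with h | h
        · subst h; exact Finset.mem_filter.2 ⟨hp, rfl⟩
        · rw [Finset.mem_singleton.1 h]
          exact Finset.mem_filter.2 ⟨hswap, Sym2.eq_swap⟩
      calc 2 = ({p, p.swap} : Finset (V × V)).card := (Finset.card_pair hpne).symm
        _ ≤ _ := Finset.card_le_card hsub
    calc 2 * D.card = ∑ _e ∈ D, 2 := by rw [Finset.sum_const, smul_eq_mul, mul_comm]
      _ ≤ ∑ e ∈ D, (F.filter fun p : V × V => s(p.1, p.2) = e).card :=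
          Finset.sum_le_sum hfib
  have hbad : badC G Finset.univ g = F.card := rfl
  omega

/-! ### Step 2: every vertex set has a cut containing at least half of its edges -/

private lemma bool_aux1 : ∀ a b : Bool, ((!a) = b) ↔ ¬ (a = b) := by decide
private lemma bool_aux2 : ∀ a b : Bool, (a = !b) ↔ ¬ (a = b) := by decide

lemma exists_halfcut [DecidableRel G.Adj] (s : Finset V) :
    ∃ g : V → Bool, 2 * badC G s g ≤ adjC G s := by
  obtain ⟨g, -, hmin⟩ := Finset.exists_min_image (Finset.univ : Finset (V → Bool))
    (fun g => badC G s g) ⟨fun _ => false, Finset.mem_univ _⟩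
  refine ⟨g, ?_⟩
  set FB : Finset (V × V) :=
    (s ×ˢ s).filter (fun p : V × V => G.Adj p.1 p.2 ∧ g p.1 = g p.2) with hFB
  set FC : Finset (V × V) :=
    (s ×ˢ s).filter (fun p : V × V => G.Adj p.1 p.2 ∧ ¬ g p.1 = g p.2) with hFC
  have key : ∀ v : V,
      (FB.filter fun p : V × V => p.1 = v ∨ p.2 = v).card
        ≤ (FC.filter fun p : V × V => p.1 = v ∨ p.2 = v).card := by
    intro v
    set g' : V → Bool := Function.update g v (!g v) with hg'
    have hb' : badC G s g ≤ badC G s g' := hmin g' (Finset.mem_univ _)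
    set FB' : Finset (V × V) :=
      (s ×ˢ s).filter (fun p : V × V => G.Adj p.1 p.2 ∧ g' p.1 = g' p.2) with hFB'
    have hupd : ∀ w : V, w ≠ v → g' w = g w := by
      intro w hw; rw [hg', Function.update_of_ne hw]
    have hupdv : g' v = !g v := by rw [hg', Function.update_self]
    have eT : FB'.filter (fun p : V × V => ¬ (p.1 = v ∨ p.2 = v))
        = FB.filter (fun p : V × V => ¬ (p.1 = v ∨ p.2 = v)) := by
      rw [hFB', hFB, Finset.filter_filter, Finset.filter_filter]
      apply Finset.filter_congr
      intro p _
      constructor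
      · rintro ⟨⟨ha, hm⟩, ht⟩
        push_neg at ht
        refine ⟨⟨ha, ?_⟩, by push_neg; exact ht⟩
        rwa [hupd p.1 ht.1, hupd p.2 ht.2] at hm
      · rintro ⟨⟨ha, hm⟩, ht⟩
        push_neg at ht
        refine ⟨⟨ha, ?_⟩, by push_neg; exact ht⟩
        rwa [hupd p.1 ht.1, hupd p.2 ht.2]
    have eX : FB'.filter (fun p : V × V => p.1 = v ∨ p.2 = v)
        = FC.filter (fun p : V × V => p.1 = v ∨ p.2 = v) := by
      rw [hFB', hFC, Finset.filter_filter, Finset.filter_filter]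
      apply Finset.filter_congr
      intro p _
      constructor
      · rintro ⟨⟨ha, hm⟩, ht⟩
        refine ⟨⟨ha, ?_⟩, ht⟩
        have hne : p.1 ≠ p.2 := ha.ne
        rcases ht with h1 | h2
        · have h2v : p.2 ≠ v := by rw [← h1]; exact fun h => hne h.symm
          rw [h1] at hm ⊢
          rw [hupdv, hupd p.2 h2v] at hm
          exact (bool_aux1 (g v) (g p.2)).1 hm
        · have h1v : p.1 ≠ v := by rw [← h2]; exact hne
          rw [h2] at hm ⊢
          rw [hupdv, hupd p.1 h1v] at hm
          exact (bool_aux2 (g p.1) (g v)).1 hm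
      · rintro ⟨⟨ha, hm⟩, ht⟩
        refine ⟨⟨ha, ?_⟩, ht⟩
        have hne : p.1 ≠ p.2 := ha.ne
        rcases ht with h1 | h2
        · have h2v : p.2 ≠ v := by rw [← h1]; exact fun h => hne h.symm
          rw [h1] at hm ⊢
          rw [hupdv, hupd p.2 h2v]
          exact (bool_aux1 (g v) (g p.2)).2 hm
        · have h1v : p.1 ≠ v := by rw [← h2]; exact hne
          rw [h2] at hm ⊢
          rw [hupdv, hupd p.1 h1v]
          exact (bool_aux2 (g p.1) (g v)).2 hm
    have d1 : (FB.filter (fun p : V × V => p.1 = v ∨ p.2 = v)).card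
        + (FB.filter (fun p : V × V => ¬ (p.1 = v ∨ p.2 = v))).card = FB.card :=
      Finset.card_filter_add_card_filter_not _
    have d2 : (FB'.filter (fun p : V × V => p.1 = v ∨ p.2 = v)).card
        + (FB'.filter (fun p : V × V => ¬ (p.1 = v ∨ p.2 = v))).card = FB'.card :=
      Finset.card_filter_add_card_filter_not _
    have hbb : FB.card ≤ FB'.card := hb'
    rw [eT, eX] at d2
    omega
  have sumtouch : ∀ (F : Finset (V × V)), (∀ p ∈ F, p.1 ≠ p.2) →
      ∑ v : V, (F.filter fun p : V × V => p.1 = v ∨ p.2 = v).card = 2 * F.card := by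
    intro F hFne
    have h1 : ∀ v : V, (F.filter fun p : V × V => p.1 = v ∨ p.2 = v).card
        = ∑ p ∈ F, if p.1 = v ∨ p.2 = v then 1 else 0 :=
      fun v => Finset.card_filter _ _
    rw [Finset.sum_congr rfl fun v _ => h1 v, Finset.sum_comm]
    have h2 : ∀ p ∈ F, (∑ v : V, if p.1 = v ∨ p.2 = v then 1 else 0) = 2 := by
      intro p hp
      rw [← Finset.card_filter]
      have h3 : Finset.univ.filter (fun v : V => p.1 = v ∨ p.2 = v) = {p.1, p.2} := by
        ext w
        simp only [Finset.mem_filter, Finset.mem_univ, true_and, Finset.mem_insert,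
          Finset.mem_singleton]
        exact or_congr eq_comm eq_comm
      rw [h3, Finset.card_pair (hFne p hp)]
    rw [Finset.sum_congr rfl h2, Finset.sum_const, smul_eq_mul, mul_comm]
  have hFBne : ∀ p ∈ FB, p.1 ≠ p.2 := fun p hp => ((Finset.mem_filter.1 hp).2).1.ne
  have hFCne : ∀ p ∈ FC, p.1 ≠ p.2 := fun p hp => ((Finset.mem_filter.1 hp).2).1.ne
  have hsum : 2 * FB.card ≤ 2 * FC.card := by
    rw [← sumtouch FB hFBne, ← sumtouch FC hFCne]
    exact Finset.sum_le_sum fun v _ => key v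
  have hsplit : FB.card + FC.card = adjC G s := by
    have := Finset.card_filter_add_card_filter_not
      (s := (s ×ˢ s).filter (fun p : V × V => G.Adj p.1 p.2))
      (p := fun p : V × V => g p.1 = g p.2)
    rw [Finset.filter_filter, Finset.filter_filter] at this
    exact this
  have hb : badC G s g = FB.card := rfl
  omega


lemma disj_prod_left {s₁ s₂ t₁ t₂ : Finset V} (h : Disjoint s₁ s₂) :
    Disjoint (s₁ ×ˢ t₁) (s₂ ×ˢ t₂) := by
  rw [Finset.disjoint_left]
  intro p hp1 hp2
  exact (Finset.disjoint_left.1 h) (Finset.mem_product.1 hp1).1 (Finset.mem_product.1 hp2).1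

lemma disj_prod_right {s₁ s₂ t₁ t₂ : Finset V} (h : Disjoint t₁ t₂) :
    Disjoint (s₁ ×ˢ t₁) (s₂ ×ˢ t₂) := by
  rw [Finset.disjoint_left]
  intro p hp1 hp2
  exact (Finset.disjoint_left.1 h) (Finset.mem_product.1 hp1).2 (Finset.mem_product.1 hp2).2

lemma quad_split (B D : Finset V) (h : Disjoint B D) (Φ : V × V → Prop) [DecidablePred Φ] :
    (((B ∪ D) ×ˢ (B ∪ D)).filter Φ).card
      = ((B ×ˢ B).filter Φ).card + ((B ×ˢ D).filter Φ).card
        + ((D ×ˢ B).filter Φ).card + ((D ×ˢ D).filter Φ).card := by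
  rw [Finset.union_product, Finset.product_union, Finset.product_union]
  rw [Finset.filter_union, Finset.filter_union, Finset.filter_union]
  have douter : Disjoint ((B ×ˢ B).filter Φ ∪ (B ×ˢ D).filter Φ)
      ((D ×ˢ B).filter Φ ∪ (D ×ˢ D).filter Φ) := by
    rw [Finset.disjoint_union_left]
    constructor <;> (rw [Finset.disjoint_union_right]; constructor) <;>
      exact Finset.disjoint_filter_filter (disj_prod_left h)
  rw [Finset.card_union_of_disjoint douter,
    Finset.card_union_of_disjoint (Finset.disjoint_filter_filter (disj_prod_right h)),
    Finset.card_union_of_disjoint (Finset.disjoint_filter_filter (disj_prod_right h))]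
  ring

lemma card_filter_swap [DecidableRel G.Adj] (s t : Finset V) :
    ((s ×ˢ t).filter fun p : V × V => G.Adj p.1 p.2).card
      = ((t ×ˢ s).filter fun p : V × V => G.Adj p.1 p.2).card := by
  apply Finset.card_bij (fun p _ => Prod.swap p)
  · intro p hp
    rw [Finset.mem_filter, Finset.mem_product] at hp ⊢
    exact ⟨⟨hp.1.2, hp.1.1⟩, hp.2.symm⟩
  · intro p hp q hq hpq
    exact Prod.swap_injective hpq
  · intro p hp
    rw [Finset.mem_filter, Finset.mem_product] at hp
    exact ⟨Prod.swap p, Finset.mem_filter.2 ⟨Finset.mem_product.2 ⟨hp.1.2, hp.1.1⟩, hp.2.symm⟩,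
      Prod.swap_swap p⟩

/-! ### Step 3: Füredi's stability lemma -/

lemma furedi [DecidableRel G.Adj] :
    ∀ (r : ℕ) (A : Finset V),
      (∀ t : Finset V, t ⊆ A → ¬ G.IsNClique (r + 1) t) →
      ∃ f : V → ℕ, (∀ v ∈ A, f v < r) ∧ adjC G A + badC G A f ≤ neqC A f := by
  intro r
  induction r with
  | zero =>
    intro A hA
    have hAe : A = ∅ := by
      rw [Finset.eq_empty_iff_forall_notMem]
      intro v hv
      exact hA {v} (Finset.singleton_subset_iff.2 hv)
        (SimpleGraph.isNClique_one.mpr ⟨v, rfl⟩)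
    subst hAe
    refine ⟨fun _ => 0, by simp, ?_⟩
    simp [adjC, badC, neqC]
  | succ r ih =>
    intro A hA
    rcases A.eq_empty_or_nonempty with rfl | hAne
    · refine ⟨fun _ => 0, by simp, ?_⟩
      simp [adjC, badC, neqC]
    obtain ⟨x, hxA, hmax⟩ := Finset.exists_max_image A
      (fun v => (A.filter fun w => G.Adj v w).card) hAne
    set D : Finset V := A.filter (fun w => G.Adj x w) with hD
    set B : Finset V := A \ D with hB
    have hDA : D ⊆ A := Finset.filter_subset _ _
    have hBD : Disjoint B D := Finset.sdiff_disjoint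
    have hBDA : B ∪ D = A := Finset.sdiff_union_of_subset hDA
    have hDcf : ∀ t : Finset V, t ⊆ D → ¬ G.IsNClique (r + 1) t := by
      intro t ht hcl
      have hclx : G.IsNClique (r + 1 + 1) (insert x t) :=
        hcl.insert (fun b hb => (Finset.mem_filter.1 (ht hb)).2)
      exact hA (insert x t) (Finset.insert_subset hxA (ht.trans hDA)) hclx
    obtain ⟨f', hf'lt, hf'ineq⟩ := ih D hDcf
    set f : V → ℕ := fun v => if v ∈ D then f' v else r with hf
    have hfD : ∀ v ∈ D, f v = f' v := fun v hv => if_pos hv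
    have hfB : ∀ v ∈ B, f v = r := fun v hv => if_neg (Finset.mem_sdiff.1 hv).2
    refine ⟨f, ?_, ?_⟩
    · intro v _
      by_cases h : v ∈ D
      · rw [hf]; simp only [if_pos h]
        exact (hf'lt v h).trans (Nat.lt_succ_self r)
      · rw [hf]; simp only [if_neg h]
        exact Nat.lt_succ_self r
    -- the counting part
    have hquadA : adjC G A
        = ((B ×ˢ B).filter fun p : V × V => G.Adj p.1 p.2).card
          + ((B ×ˢ D).filter fun p : V × V => G.Adj p.1 p.2).card
          + ((D ×ˢ B).filter fun p : V × V => G.Adj p.1 p.2).card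
          + ((D ×ˢ D).filter fun p : V × V => G.Adj p.1 p.2).card := by
      rw [adjC, ← hBDA]
      exact quad_split B D hBD _
    have hquadB : badC G A f
        = ((B ×ˢ B).filter fun p : V × V => G.Adj p.1 p.2 ∧ f p.1 = f p.2).card
          + ((B ×ˢ D).filter fun p : V × V => G.Adj p.1 p.2 ∧ f p.1 = f p.2).card
          + ((D ×ˢ B).filter fun p : V × V => G.Adj p.1 p.2 ∧ f p.1 = f p.2).card
          + ((D ×ˢ D).filter fun p : V × V => G.Adj p.1 p.2 ∧ f p.1 = f p.2).card := by
      rw [badC, ← hBDA]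
      exact quad_split B D hBD _
    have hquadN : neqC A f
        = ((B ×ˢ B).filter fun p : V × V => ¬ f p.1 = f p.2).card
          + ((B ×ˢ D).filter fun p : V × V => ¬ f p.1 = f p.2).card
          + ((D ×ˢ B).filter fun p : V × V => ¬ f p.1 = f p.2).card
          + ((D ×ˢ D).filter fun p : V × V => ¬ f p.1 = f p.2).card := by
      rw [neqC, ← hBDA]
      exact quad_split B D hBD _
    -- identify the pieces
    have hbadBB : ((B ×ˢ B).filter fun p : V × V => G.Adj p.1 p.2 ∧ f p.1 = f p.2).card
        = ((B ×ˢ B).filter fun p : V × V => G.Adj p.1 p.2).card := by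
      congr 1
      apply Finset.filter_congr
      intro p hp
      have hp' := Finset.mem_product.1 hp
      constructor
      · exact fun h => h.1
      · exact fun h => ⟨h, by rw [hfB _ hp'.1, hfB _ hp'.2]⟩
    have hbadBD : ((B ×ˢ D).filter fun p : V × V => G.Adj p.1 p.2 ∧ f p.1 = f p.2).card = 0 := by
      rw [Finset.card_eq_zero, Finset.filter_eq_empty_iff]
      intro p hp
      have hp' := Finset.mem_product.1 hp
      intro h
      have := h.2
      rw [hfB _ hp'.1, hfD _ hp'.2] at this
      exact (ne_of_lt (hf'lt _ hp'.2)).symm this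
    have hbadDB : ((D ×ˢ B).filter fun p : V × V => G.Adj p.1 p.2 ∧ f p.1 = f p.2).card = 0 := by
      rw [Finset.card_eq_zero, Finset.filter_eq_empty_iff]
      intro p hp
      have hp' := Finset.mem_product.1 hp
      intro h
      have := h.2
      rw [hfD _ hp'.1, hfB _ hp'.2] at this
      exact (ne_of_lt (hf'lt _ hp'.1)) this
    have hbadDD : ((D ×ˢ D).filter fun p : V × V => G.Adj p.1 p.2 ∧ f p.1 = f p.2).card
        = badC G D f' := by
      rw [badC]
      congr 1
      apply Finset.filter_congr
      intro p hp
      have hp' := Finset.mem_product.1 hp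
      rw [hfD _ hp'.1, hfD _ hp'.2]
    have hneqBD : ((B ×ˢ D).filter fun p : V × V => ¬ f p.1 = f p.2).card
        = B.card * D.card := by
      rw [Finset.filter_true_of_mem, Finset.card_product]
      intro p hp
      have hp' := Finset.mem_product.1 hp
      rw [hfB _ hp'.1, hfD _ hp'.2]
      exact (ne_of_lt (hf'lt _ hp'.2)).symm
    have hneqDB : ((D ×ˢ B).filter fun p : V × V => ¬ f p.1 = f p.2).card
        = D.card * B.card := by
      rw [Finset.filter_true_of_mem, Finset.card_product]
      intro p hp
      have hp' := Finset.mem_product.1 hp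
      rw [hfD _ hp'.1, hfB _ hp'.2]
      exact ne_of_lt (hf'lt _ hp'.1)
    have hneqDD : ((D ×ˢ D).filter fun p : V × V => ¬ f p.1 = f p.2).card
        = neqC D f' := by
      rw [neqC]
      congr 1
      apply Finset.filter_congr
      intro p hp
      have hp' := Finset.mem_product.1 hp
      rw [hfD _ hp'.1, hfD _ hp'.2]
    -- the degree bound
    have hdeg : ((B ×ˢ B).filter fun p : V × V => G.Adj p.1 p.2).card
        + ((B ×ˢ D).filter fun p : V × V => G.Adj p.1 p.2).card ≤ B.card * D.card := by
      have hsplit : ((B ×ˢ A).filter fun p : V × V => G.Adj p.1 p.2).card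
          = ((B ×ˢ B).filter fun p : V × V => G.Adj p.1 p.2).card
            + ((B ×ˢ D).filter fun p : V × V => G.Adj p.1 p.2).card := by
        rw [← hBDA, Finset.product_union, Finset.filter_union,
          Finset.card_union_of_disjoint (Finset.disjoint_filter_filter (disj_prod_right hBD))]
      rw [← hsplit]
      have hsum : ((B ×ˢ A).filter fun p : V × V => G.Adj p.1 p.2).card
          = ∑ b ∈ B, (A.filter fun w => G.Adj b w).card := by
        rw [Finset.card_filter, Finset.sum_product]
        exact Finset.sum_congr rfl fun b _ => (Finset.card_filter _ _).symm
      rw [hsum]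
      calc ∑ b ∈ B, (A.filter fun w => G.Adj b w).card
          ≤ ∑ _b ∈ B, D.card :=
            Finset.sum_le_sum fun b hb => hmax b (Finset.mem_sdiff.1 hb).1
        _ = B.card * D.card := by rw [Finset.sum_const, smul_eq_mul]
    have hswap : ((D ×ˢ B).filter fun p : V × V => G.Adj p.1 p.2).card
        = ((B ×ˢ D).filter fun p : V × V => G.Adj p.1 p.2).card := card_filter_swap G D B
    have hcomm : D.card * B.card = B.card * D.card := Nat.mul_comm _ _
    -- assemble
    rw [hquadA, hquadB, hquadN, hbadBB, hbadBD, hbadDB, hbadDD, hneqBD, hneqDB, hneqDD, hswap,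
      hcomm]
    have hIH := hf'ineq
    have hadjDD : ((D ×ˢ D).filter fun p : V × V => G.Adj p.1 p.2).card = adjC G D := rfl
    rw [hadjDD]
    omega


def classOf (fb : V → Fin 5) (t : Fin 5) : Finset V := Finset.univ.filter fun v => fb v = t

lemma mem_classOf {fb : V → Fin 5} {t : Fin 5} {v : V} : v ∈ classOf fb t ↔ fb v = t := by
  simp [classOf]

/-- all ordered adjacent pairs -/
def FA (G : SimpleGraph V) [DecidableRel G.Adj] : Finset (V × V) :=
  (Finset.univ ×ˢ Finset.univ).filter fun p : V × V => G.Adj p.1 p.2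

/-- internal ordered adjacent pairs -/
def FI (G : SimpleGraph V) [DecidableRel G.Adj] (fb : V → Fin 5) : Finset (V × V) :=
  (FA G).filter fun p : V × V => fb p.1 = fb p.2

/-- crossing ordered adjacent pairs -/
def FX (G : SimpleGraph V) [DecidableRel G.Adj] (fb : V → Fin 5) : Finset (V × V) :=
  (FA G).filter fun p : V × V => ¬ fb p.1 = fb p.2

/-- internal ordered adjacent pairs, monochromatic for the class cuts -/
def FM (G : SimpleGraph V) [DecidableRel G.Adj] (fb : V → Fin 5) (gf : Fin 5 → V → Bool) :
    Finset (V × V) :=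
  (FI G fb).filter fun p : V × V => gf (fb p.1) p.1 = gf (fb p.2) p.2

/-- internal ordered adjacent pairs, bichromatic for the class cuts -/
def FB2 (G : SimpleGraph V) [DecidableRel G.Adj] (fb : V → Fin 5) (gf : Fin 5 → V → Bool) :
    Finset (V × V) :=
  (FI G fb).filter fun p : V × V => ¬ gf (fb p.1) p.1 = gf (fb p.2) p.2

variable {G : SimpleGraph V}

lemma split_IX [DecidableRel G.Adj] (fb : V → Fin 5) :
    (FI G fb).card + (FX G fb).card = (FA G).card :=
  Finset.card_filter_add_card_filter_not _

lemma split_MB [DecidableRel G.Adj] (fb : V → Fin 5) (gf : Fin 5 → V → Bool) :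
    (FM G fb gf).card + (FB2 G fb gf).card = (FI G fb).card :=
  Finset.card_filter_add_card_filter_not _

lemma adjC_univ [DecidableRel G.Adj] : adjC G Finset.univ = (FA G).card := rfl

lemma fiber5 (fb : V → Fin 5) (F : Finset (V × V)) :
    F.card = ∑ t : Fin 5, (F.filter fun p : V × V => fb p.1 = t).card :=
  Finset.card_eq_sum_card_fiberwise fun p _ => Finset.mem_univ _

lemma FM_fiber [DecidableRel G.Adj] (fb : V → Fin 5) (gf : Fin 5 → V → Bool) (t : Fin 5) :
    (FM G fb gf).filter (fun p : V × V => fb p.1 = t)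
      = (classOf fb t ×ˢ classOf fb t).filter
          (fun p : V × V => G.Adj p.1 p.2 ∧ gf t p.1 = gf t p.2) := by
  ext p
  simp only [FM, FI, FA, Finset.mem_filter, Finset.mem_product, Finset.mem_univ, true_and,
    mem_classOf]
  constructor
  · rintro ⟨⟨⟨hadj, hfe⟩, hgfe⟩, ht⟩
    have ht2 : fb p.2 = t := by rw [← hfe]; exact ht
    rw [ht, ht2] at hgfe
    exact ⟨⟨ht, ht2⟩, hadj, hgfe⟩
  · rintro ⟨⟨h1, h2⟩, hadj, hg⟩
    have hfe : fb p.1 = fb p.2 := by rw [h1, h2]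
    refine ⟨⟨⟨hadj, hfe⟩, ?_⟩, h1⟩
    rw [h1, h2]
    exact hg

lemma FI_fiber [DecidableRel G.Adj] (fb : V → Fin 5) (t : Fin 5) :
    (FI G fb).filter (fun p : V × V => fb p.1 = t)
      = (classOf fb t ×ˢ classOf fb t).filter (fun p : V × V => G.Adj p.1 p.2) := by
  ext p
  simp only [FI, FA, Finset.mem_filter, Finset.mem_product, Finset.mem_univ, true_and,
    mem_classOf]
  constructor
  · rintro ⟨⟨hadj, hfe⟩, ht⟩
    have ht2 : fb p.2 = t := by rw [← hfe]; exact ht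
    exact ⟨⟨ht, ht2⟩, hadj⟩
  · rintro ⟨⟨h1, h2⟩, hadj⟩
    exact ⟨⟨hadj, by rw [h1, h2]⟩, h1⟩

lemma FM_card [DecidableRel G.Adj] (fb : V → Fin 5) (gf : Fin 5 → V → Bool) :
    (FM G fb gf).card = ∑ t : Fin 5, badC G (classOf fb t) (gf t) := by
  rw [fiber5 fb (FM G fb gf)]
  exact Finset.sum_congr rfl fun t _ => by rw [FM_fiber fb gf t]; rfl

lemma FI_card [DecidableRel G.Adj] (fb : V → Fin 5) :
    (FI G fb).card = ∑ t : Fin 5, adjC G (classOf fb t) := by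
  rw [fiber5 fb (FI G fb)]
  exact Finset.sum_congr rfl fun t _ => by rw [FI_fiber fb t]; rfl

lemma two_FM_le [DecidableRel G.Adj] (fb : V → Fin 5) (gf : Fin 5 → V → Bool)
    (hgf : ∀ t, 2 * badC G (classOf fb t) (gf t) ≤ adjC G (classOf fb t)) :
    2 * (FM G fb gf).card ≤ (FI G fb).card := by
  rw [FM_card fb gf, FI_card fb, Finset.mul_sum]
  exact Finset.sum_le_sum fun t _ => hgf t

/-- The sum over all configurations of monochromatic pair counts. -/
lemma config_sum [DecidableRel G.Adj] (fb : V → Fin 5) (gf : Fin 5 → V → Bool) :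
    ∑ c ∈ CFG, badC G Finset.univ (fun v => hfun c (fb v, gf (fb v) v))
      = ∑ p ∈ FA G, W (fb p.1, gf (fb p.1) p.1) (fb p.2, gf (fb p.2) p.2) := by
  have h1 : ∀ c : Fin 5 × Fin 5 × Fin 5 × Bool,
      badC G Finset.univ (fun v => hfun c (fb v, gf (fb v) v))
        = ∑ p ∈ Finset.univ ×ˢ Finset.univ,
            if G.Adj p.1 p.2 ∧ hfun c (fb p.1, gf (fb p.1) p.1) = hfun c (fb p.2, gf (fb p.2) p.2)
              then 1 else 0 :=
    fun c => Finset.card_filter _ _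
  rw [Finset.sum_congr rfl fun c _ => h1 c, Finset.sum_comm]
  have h2 : ∀ p : V × V, p ∈ (Finset.univ ×ˢ Finset.univ : Finset (V × V)) →
      (∑ c ∈ CFG,
        if G.Adj p.1 p.2 ∧ hfun c (fb p.1, gf (fb p.1) p.1) = hfun c (fb p.2, gf (fb p.2) p.2)
          then 1 else 0)
      = if G.Adj p.1 p.2
          then W (fb p.1, gf (fb p.1) p.1) (fb p.2, gf (fb p.2) p.2) else 0 := by
    intro p _
    by_cases hadj : G.Adj p.1 p.2
    · rw [if_pos hadj]
      have h3 : W (fb p.1, gf (fb p.1) p.1) (fb p.2, gf (fb p.2) p.2)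
          = ∑ c ∈ CFG,
              if hfun c (fb p.1, gf (fb p.1) p.1) = hfun c (fb p.2, gf (fb p.2) p.2)
                then 1 else 0 := Finset.card_filter _ _
      rw [h3]
      exact Finset.sum_congr rfl fun c _ => by simp only [hadj, true_and]
    · rw [if_neg hadj]
      exact Finset.sum_eq_zero fun c _ => by rw [if_neg (fun h => hadj h.1)]
  rw [Finset.sum_congr rfl h2, ← Finset.sum_filter]
  rfl

lemma sum_W_le [DecidableRel G.Adj] (fb : V → Fin 5) (gf : Fin 5 → V → Bool) :
    ∑ p ∈ FA G, W (fb p.1, gf (fb p.1) p.1) (fb p.2, gf (fb p.2) p.2)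
      ≤ 48 * (FX G fb).card + 120 * (FM G fb gf).card + 96 * (FB2 G fb gf).card := by
  have hsplit : ∑ p ∈ FA G, W (fb p.1, gf (fb p.1) p.1) (fb p.2, gf (fb p.2) p.2)
      = ∑ p ∈ FI G fb, W (fb p.1, gf (fb p.1) p.1) (fb p.2, gf (fb p.2) p.2)
        + ∑ p ∈ FX G fb, W (fb p.1, gf (fb p.1) p.1) (fb p.2, gf (fb p.2) p.2) :=
    (Finset.sum_filter_add_sum_filter_not (FA G) _ _).symm
  have hcross : ∑ p ∈ FX G fb, W (fb p.1, gf (fb p.1) p.1) (fb p.2, gf (fb p.2) p.2)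
      = 48 * (FX G fb).card := by
    have h : ∀ p ∈ FX G fb,
        W (fb p.1, gf (fb p.1) p.1) (fb p.2, gf (fb p.2) p.2) = 48 := by
      intro p hp
      exact W_cross' _ _ (Finset.mem_filter.1 hp).2
    rw [Finset.sum_congr rfl h, Finset.sum_const, smul_eq_mul, mul_comm]
  have hsplit2 : ∑ p ∈ FI G fb, W (fb p.1, gf (fb p.1) p.1) (fb p.2, gf (fb p.2) p.2)
      = ∑ p ∈ FM G fb gf, W (fb p.1, gf (fb p.1) p.1) (fb p.2, gf (fb p.2) p.2)
        + ∑ p ∈ FB2 G fb gf, W (fb p.1, gf (fb p.1) p.1) (fb p.2, gf (fb p.2) p.2) :=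
    (Finset.sum_filter_add_sum_filter_not (FI G fb) _ _).symm
  have hWi : ∀ p ∈ FI G fb, W (fb p.1, gf (fb p.1) p.1) (fb p.2, gf (fb p.2) p.2)
      = if gf (fb p.1) p.1 = gf (fb p.2) p.2 then 120 else 96 := by
    intro p hp
    have hpe : fb p.1 = fb p.2 := (Finset.mem_filter.1 hp).2
    rw [← hpe]
    exact W_int' (fb p.1) _ _
  have hmono : ∑ p ∈ FM G fb gf, W (fb p.1, gf (fb p.1) p.1) (fb p.2, gf (fb p.2) p.2)
      = 120 * (FM G fb gf).card := by
    have h : ∀ p ∈ FM G fb gf,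
        W (fb p.1, gf (fb p.1) p.1) (fb p.2, gf (fb p.2) p.2) = 120 := by
      intro p hp
      have hp' := Finset.mem_filter.1 hp
      rw [hWi p hp'.1, if_pos hp'.2]
    rw [Finset.sum_congr rfl h, Finset.sum_const, smul_eq_mul, mul_comm]
  have hbi : ∑ p ∈ FB2 G fb gf, W (fb p.1, gf (fb p.1) p.1) (fb p.2, gf (fb p.2) p.2)
      = 96 * (FB2 G fb gf).card := by
    have h : ∀ p ∈ FB2 G fb gf,
        W (fb p.1, gf (fb p.1) p.1) (fb p.2, gf (fb p.2) p.2) = 96 := by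
      intro p hp
      have hp' := Finset.mem_filter.1 hp
      rw [hWi p hp'.1, if_neg hp'.2]
    rw [Finset.sum_congr rfl h, Finset.sum_const, smul_eq_mul, mul_comm]
  rw [hsplit, hsplit2, hcross, hmono, hbi]
  omega

/-- There is a configuration whose 2-colouring has few monochromatic pairs. -/
lemma exists_good_config [DecidableRel G.Adj] (fb : V → Fin 5) (gf : Fin 5 → V → Bool)
    (hgf : ∀ t, 2 * badC G (classOf fb t) (gf t) ≤ adjC G (classOf fb t)) :
    ∃ g : V → Bool, 120 * badC G Finset.univ g ≤ 48 * (FX G fb).card + 108 * (FI G fb).card := by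
  obtain ⟨c, hcCFG, hcmin⟩ := Finset.exists_min_image CFG
    (fun c => badC G Finset.univ (fun v => hfun c (fb v, gf (fb v) v))) CFG_nonempty
  refine ⟨fun v => hfun c (fb v, gf (fb v) v), ?_⟩
  have hle : CFG.card • badC G Finset.univ (fun v => hfun c (fb v, gf (fb v) v))
      ≤ ∑ c' ∈ CFG, badC G Finset.univ (fun v => hfun c' (fb v, gf (fb v) v)) :=
    Finset.card_nsmul_le_sum _ _ _ fun c' hc' => hcmin c' hc'
  rw [CFG_card, smul_eq_mul, config_sum fb gf] at hle
  have h2 := sum_W_le fb gf (G := G)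
  have h3 := two_FM_le fb gf hgf
  have h4 := split_MB fb gf (G := G)
  omega

lemma badf_eq [DecidableRel G.Adj] (f : V → ℕ) (fb : V → Fin 5)
    (hc : ∀ v, ((fb v : ℕ)) = f v) :
    badC G Finset.univ f = (FI G fb).card := by
  rw [badC, FI, FA, Finset.filter_filter]
  congr 1
  apply Finset.filter_congr
  intro p _
  have hiff : fb p.1 = fb p.2 ↔ f p.1 = f p.2 := by
    constructor
    · intro h; rw [← hc p.1, ← hc p.2, h]
    · intro h; apply Fin.ext; rw [hc p.1, hc p.2]; exact h
  exact and_congr_right fun _ => hiff.symm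

lemma neq_bound (f : V → ℕ) (fb : V → Fin 5) (hc : ∀ v, ((fb v : ℕ)) = f v) :
    5 * neqC Finset.univ f ≤ 4 * (Fintype.card V * Fintype.card V) := by
  classical
  set Ef : Finset (V × V) :=
    (Finset.univ ×ˢ Finset.univ).filter (fun p : V × V => f p.1 = f p.2) with hEf
  have hiff : ∀ u w : V, fb u = fb w ↔ f u = f w := by
    intro u w
    constructor
    · intro h; rw [← hc u, ← hc w, h]
    · intro h; apply Fin.ext; rw [hc u, hc w]; exact h
  have hQE : Ef.card + neqC Finset.univ f = Fintype.card V * Fintype.card V := by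
    have h := Finset.card_filter_add_card_filter_not
      (s := (Finset.univ ×ˢ Finset.univ : Finset (V × V)))
      (p := fun p : V × V => f p.1 = f p.2)
    rw [Finset.card_product, Finset.card_univ] at h
    exact h
  have hEfib : Ef.card = ∑ t : Fin 5, (classOf fb t).card * (classOf fb t).card := by
    rw [fiber5 fb Ef]
    apply Finset.sum_congr rfl
    intro t _
    rw [← Finset.card_product]
    congr 1
    ext p
    simp only [hEf, Finset.mem_filter, Finset.mem_product, Finset.mem_univ, true_and,
      mem_classOf]
    constructor
    · rintro ⟨hfe, ht⟩
      refine ⟨ht, ?_⟩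
      rw [← (hiff p.1 p.2).2 hfe]
      exact ht
    · rintro ⟨h1, h2⟩
      exact ⟨(hiff p.1 p.2).1 (by rw [h1, h2]), h1⟩
  have hnsum : Fintype.card V = ∑ t : Fin 5, (classOf fb t).card := by
    have h := Finset.card_eq_sum_card_fiberwise
      (f := fb) (s := (Finset.univ : Finset V)) (t := (Finset.univ : Finset (Fin 5)))
      (fun v _ => Finset.mem_univ _)
    rw [Finset.card_univ] at h
    exact h
  have hCS : Fintype.card V * Fintype.card V
      ≤ 5 * ∑ t : Fin 5, (classOf fb t).card * (classOf fb t).card := by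
    have hz : ((Fintype.card V : ℤ)) * (Fintype.card V : ℤ)
        ≤ 5 * ∑ t : Fin 5, ((classOf fb t).card : ℤ) * ((classOf fb t).card : ℤ) := by
      have hzn : ((Fintype.card V : ℤ)) = ∑ t : Fin 5, ((classOf fb t).card : ℤ) := by
        rw [hnsum]; push_cast; rfl
      rw [hzn, Fin.sum_univ_five, Fin.sum_univ_five]
      set a0 := ((classOf fb 0).card : ℤ)
      set a1 := ((classOf fb 1).card : ℤ)
      set a2 := ((classOf fb 2).card : ℤ)
      set a3 := ((classOf fb 3).card : ℤ)
      set a4 := ((classOf fb 4).card : ℤ)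
      nlinarith [sq_nonneg (a0 - a1), sq_nonneg (a0 - a2), sq_nonneg (a0 - a3),
        sq_nonneg (a0 - a4), sq_nonneg (a1 - a2), sq_nonneg (a1 - a3), sq_nonneg (a1 - a4),
        sq_nonneg (a2 - a3), sq_nonneg (a2 - a4), sq_nonneg (a3 - a4)]
    exact_mod_cast hz
  rw [hEfib] at hQE
  linarith

end TauBAux

set_option maxHeartbeats 2000000 in
open TauBAux in
/-- For every `K₆`-free graph `G` on `n` vertices, `τ_B(G) ≤ 17 n² / 100`. -/
theorem tauB_le_of_cliqueFree_six (G : SimpleGraph V) (h6 : G.CliqueFree 6) :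
    (tauB G : ℝ) ≤ 17 * (Fintype.card V : ℝ) ^ 2 / 100 := by
  letI : DecidableRel G.Adj := fun a b => Classical.propDecidable _
  obtain ⟨f, hflt, hfineq⟩ := furedi G 5 Finset.univ (fun t _ => h6 t)
  have hflt' : ∀ v : V, f v < 5 := fun v => hflt v (Finset.mem_univ v)
  obtain ⟨g0, hg0⟩ := exists_halfcut G (Finset.univ : Finset V)
  have ht2 : 2 * tauB G ≤ badC G Finset.univ g0 := two_tauB_le G g0
  have hg0' : 2 * badC G Finset.univ g0 ≤ (FA G).card := by
    rw [← adjC_univ]; exact hg0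
  set fb : V → Fin 5 := fun v => ⟨f v, hflt' v⟩ with hfb
  have hc : ∀ v, ((fb v : ℕ)) = f v := fun v => rfl
  choose gf hgf using fun t => exists_halfcut G (classOf fb t)
  obtain ⟨g, hgbound⟩ := exists_good_config fb gf hgf
  have ht1 : 2 * tauB G ≤ badC G Finset.univ g := two_tauB_le G g
  have hIX := split_IX fb (G := G)
  have hfur : (FA G).card + (FI G fb).card ≤ neqC Finset.univ f := by
    rw [← adjC_univ, ← badf_eq f fb hc]
    exact hfineq
  have hneq := neq_bound f fb hc
  set N := Fintype.card V * Fintype.card V with hN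
  have hkey : 6 * tauB G ≤ N := by omega
  have hR : (6 : ℝ) * (tauB G : ℝ) ≤ (Fintype.card V : ℝ) * (Fintype.card V : ℝ) := by
    have : (6 * tauB G : ℕ) ≤ (Fintype.card V * Fintype.card V : ℕ) := by rw [← hN]; exact hkey
    exact_mod_cast this
  have hnn : (0 : ℝ) ≤ (Fintype.card V : ℝ) * (Fintype.card V : ℝ) := by positivity
  rw [pow_two]
  linarith
end

section
/- For every graph G on n vertices with e edges, α₁(G) ≤ n²/2 − e. -/
open SimpleGraph Finset

variable {V : Type*} [Fintype V] [DecidableEq V]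

lemma card_union5 {α : Type*} [DecidableEq α] (a b c d e : Finset α) :
    (a ∪ b ∪ c ∪ d ∪ e).card ≤ a.card + b.card + c.card + d.card + e.card :=
  calc (a ∪ b ∪ c ∪ d ∪ e).card ≤ (a ∪ b ∪ c ∪ d).card + e.card := Finset.card_union_le _ _
    _ ≤ (a ∪ b ∪ c).card + d.card + e.card := by
        have := Finset.card_union_le (a ∪ b ∪ c) d; omega
    _ ≤ (a ∪ b).card + c.card + d.card + e.card := by
        have := Finset.card_union_le (a ∪ b) c; omega
    _ ≤ a.card + b.card + c.card + d.card + e.card := by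
        have := Finset.card_union_le a b; omega

/-- If `s(u,v) ∈ A`, the `A`-neighbors of `u` and `G`-neighbors of `v` within `S`
are disjoint. -/
lemma disj_key (G : SimpleGraph V) [DecidableRel G.Adj] {A : Finset (Sym2 V)}
    (hA : IsTriangleIndep G A) {u v : V} (huv : s(u, v) ∈ A) (S : Finset V) :
    (S.filter fun x => s(u, x) ∈ A).card + (S.filter fun x => G.Adj v x).card ≤ S.card := by
  rw [← Finset.card_union_of_disjoint ?_]
  · exact Finset.card_le_card (by
      intro x hx
      rcases Finset.mem_union.1 hx with h | h <;> exact (Finset.mem_filter.1 h).1)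
  · rw [Finset.disjoint_left]
    intro x hx1 hx2
    have hux : s(u, x) ∈ A := (Finset.mem_filter.1 hx1).2
    have hvx : G.Adj v x := (Finset.mem_filter.1 hx2).2
    have hadjuv : G.Adj u v := (G.mem_edgeSet).1 (hA.1 huv)
    have hadjux : G.Adj u x := (G.mem_edgeSet).1 (hA.1 hux)
    have h2 := hA.2 v u x hadjuv.symm hadjux hvx
    have hvx' : v ≠ x := hvx.ne
    have hsub : ({s(u, v), s(u, x)} : Finset (Sym2 V)) ⊆
        ({s(v, u), s(u, x), s(v, x)} : Finset (Sym2 V)) ∩ A := by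
      intro e he
      rcases Finset.mem_insert.1 he with rfl | he
      · refine Finset.mem_inter.2 ⟨?_, huv⟩
        simp [Sym2.eq_swap]
      · rw [Finset.mem_singleton.1 he]
        exact Finset.mem_inter.2 ⟨by simp, hux⟩
    have hne : (s(u, v) : Sym2 V) ≠ s(u, x) :=
      fun h => hvx' (Sym2.congr_right.mp h)
    have := Finset.card_le_card hsub
    rw [Finset.card_pair hne] at this
    omega

lemma main_count (G : SimpleGraph V) [DecidableRel G.Adj] {A : Finset (Sym2 V)}
    (hA : IsTriangleIndep G A) :
    ∀ n (S : Finset V), S.card ≤ n →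
      (S.offDiag.filter fun p => s(p.1, p.2) ∈ A).card
        + (S.offDiag.filter fun p => G.Adj p.1 p.2).card ≤ S.card ^ 2 := by
  intro n
  induction n with
  | zero =>
    intro S hS
    have : S = ∅ := Finset.card_eq_zero.1 (Nat.le_zero.1 hS)
    subst this
    simp only [Finset.offDiag_empty, Finset.filter_empty, Finset.card_empty]
    omega
  | succ n ih =>
    intro S hS
    by_cases hQ : (S.offDiag.filter fun p => s(p.1, p.2) ∈ A) = ∅
    · rw [hQ]
      simp only [Finset.card_empty, zero_add]
      calc (S.offDiag.filter fun p => G.Adj p.1 p.2).card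
          ≤ S.offDiag.card := Finset.card_filter_le _ _
        _ = S.card * S.card - S.card := Finset.offDiag_card S
        _ ≤ S.card ^ 2 := by rw [sq]; omega
    · obtain ⟨p, hp⟩ := Finset.nonempty_iff_ne_empty.2 hQ
      obtain ⟨hpd, hpA⟩ := Finset.mem_filter.1 hp
      obtain ⟨hu, hv, hne⟩ := Finset.mem_offDiag.1 hpd
      set u := p.1 with hu'
      set v := p.2 with hv'
      set S' := S \ {u, v} with hS'def
      have hsub : ({u, v} : Finset V) ⊆ S := by
        intro x hx; rcases Finset.mem_insert.1 hx with rfl | hx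
        · exact hu
        · rw [Finset.mem_singleton.1 hx]; exact hv
      have hScard : S.card = S'.card + 2 := by
        have h1 : S'.card = S.card - 2 := by
          rw [hS'def, Finset.card_sdiff_of_subset hsub, Finset.card_pair hne]
        have h2 : 2 ≤ S.card := by
          calc 2 = ({u, v} : Finset V).card := (Finset.card_pair hne).symm
            _ ≤ S.card := Finset.card_le_card hsub
        omega
      -- neighborhoods
      set NAu := S.filter (fun x => s(u, x) ∈ A) with hNAu
      set NAv := S.filter (fun x => s(v, x) ∈ A) with hNAv
      set NGu := S.filter (fun x => G.Adj u x) with hNGu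
      set NGv := S.filter (fun x => G.Adj v x) with hNGv
      have hvNAu : v ∈ NAu := Finset.mem_filter.2 ⟨hv, hpA⟩
      have hadjuv : G.Adj u v := (G.mem_edgeSet).1 (hA.1 hpA)
      have hvNGu : v ∈ NGu := Finset.mem_filter.2 ⟨hv, hadjuv⟩
      have huNAv : u ∈ NAv := Finset.mem_filter.2 ⟨hu, by rwa [Sym2.eq_swap]⟩
      have huNGv : u ∈ NGv := Finset.mem_filter.2 ⟨hu, hadjuv.symm⟩
      -- cover for the A-pairs
      have coverA : (S.offDiag.filter fun p => s(p.1, p.2) ∈ A) ⊆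
          (S'.offDiag.filter fun p => s(p.1, p.2) ∈ A)
          ∪ {u} ×ˢ NAu ∪ {v} ×ˢ NAv
          ∪ (NAu \ {u, v}) ×ˢ {u} ∪ (NAv \ {u, v}) ×ˢ {v} := by
        intro q hq
        obtain ⟨hqd, hqA⟩ := Finset.mem_filter.1 hq
        obtain ⟨hq1, hq2, hqne⟩ := Finset.mem_offDiag.1 hqd
        simp only [Finset.mem_union]
        by_cases h1 : q.1 = u
        · refine Or.inl (Or.inl (Or.inl (Or.inr ?_)))
          refine Finset.mem_product.2 ⟨Finset.mem_singleton.2 h1, ?_⟩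
          exact Finset.mem_filter.2 ⟨hq2, by rwa [h1] at hqA⟩
        by_cases h2 : q.1 = v
        · refine Or.inl (Or.inl (Or.inr ?_))
          refine Finset.mem_product.2 ⟨Finset.mem_singleton.2 h2, ?_⟩
          exact Finset.mem_filter.2 ⟨hq2, by rwa [h2] at hqA⟩
        by_cases h3 : q.2 = u
        · refine Or.inl (Or.inr ?_)
          refine Finset.mem_product.2 ⟨?_, Finset.mem_singleton.2 h3⟩
          refine Finset.mem_sdiff.2 ⟨Finset.mem_filter.2 ⟨hq1, ?_⟩, by simp [h1, h2]⟩
          rw [Sym2.eq_swap]; rwa [h3] at hqA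
        by_cases h4 : q.2 = v
        · refine Or.inr ?_
          refine Finset.mem_product.2 ⟨?_, Finset.mem_singleton.2 h4⟩
          refine Finset.mem_sdiff.2 ⟨Finset.mem_filter.2 ⟨hq1, ?_⟩, by simp [h1, h2]⟩
          rw [Sym2.eq_swap]; rwa [h4] at hqA
        · refine Or.inl (Or.inl (Or.inl (Or.inl ?_)))
          refine Finset.mem_filter.2 ⟨Finset.mem_offDiag.2 ⟨?_, ?_, hqne⟩, hqA⟩
          · exact Finset.mem_sdiff.2 ⟨hq1, by simp [h1, h2]⟩
          · exact Finset.mem_sdiff.2 ⟨hq2, by simp [h3, h4]⟩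
      -- cover for the G-pairs
      have coverG : (S.offDiag.filter fun p => G.Adj p.1 p.2) ⊆
          (S'.offDiag.filter fun p => G.Adj p.1 p.2)
          ∪ {u} ×ˢ NGu ∪ {v} ×ˢ NGv
          ∪ (NGu \ {u, v}) ×ˢ {u} ∪ (NGv \ {u, v}) ×ˢ {v} := by
        intro q hq
        obtain ⟨hqd, hqA⟩ := Finset.mem_filter.1 hq
        obtain ⟨hq1, hq2, hqne⟩ := Finset.mem_offDiag.1 hqd
        simp only [Finset.mem_union]
        by_cases h1 : q.1 = u
        · refine Or.inl (Or.inl (Or.inl (Or.inr ?_)))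
          refine Finset.mem_product.2 ⟨Finset.mem_singleton.2 h1, ?_⟩
          exact Finset.mem_filter.2 ⟨hq2, by rwa [h1] at hqA⟩
        by_cases h2 : q.1 = v
        · refine Or.inl (Or.inl (Or.inr ?_))
          refine Finset.mem_product.2 ⟨Finset.mem_singleton.2 h2, ?_⟩
          exact Finset.mem_filter.2 ⟨hq2, by rwa [h2] at hqA⟩
        by_cases h3 : q.2 = u
        · refine Or.inl (Or.inr ?_)
          refine Finset.mem_product.2 ⟨?_, Finset.mem_singleton.2 h3⟩
          refine Finset.mem_sdiff.2 ⟨Finset.mem_filter.2 ⟨hq1, ?_⟩, by simp [h1, h2]⟩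
          have : G.Adj q.1 u := by rwa [h3] at hqA
          exact this.symm
        by_cases h4 : q.2 = v
        · refine Or.inr ?_
          refine Finset.mem_product.2 ⟨?_, Finset.mem_singleton.2 h4⟩
          refine Finset.mem_sdiff.2 ⟨Finset.mem_filter.2 ⟨hq1, ?_⟩, by simp [h1, h2]⟩
          have : G.Adj q.1 v := by rwa [h4] at hqA
          exact this.symm
        · refine Or.inl (Or.inl (Or.inl (Or.inl ?_)))
          refine Finset.mem_filter.2 ⟨Finset.mem_offDiag.2 ⟨?_, ?_, hqne⟩, hqA⟩
          · exact Finset.mem_sdiff.2 ⟨hq1, by simp [h1, h2]⟩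
          · exact Finset.mem_sdiff.2 ⟨hq2, by simp [h3, h4]⟩
      -- card bounds from covers
      have cardA : (S.offDiag.filter fun p => s(p.1, p.2) ∈ A).card ≤
          (S'.offDiag.filter fun p => s(p.1, p.2) ∈ A).card
          + NAu.card + NAv.card + (NAu \ {u, v}).card + (NAv \ {u, v}).card := by
        refine (Finset.card_le_card coverA).trans ?_
        refine (card_union5 _ _ _ _ _).trans ?_
        simp [Finset.card_product]
      have cardG : (S.offDiag.filter fun p => G.Adj p.1 p.2).card ≤
          (S'.offDiag.filter fun p => G.Adj p.1 p.2).card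
          + NGu.card + NGv.card + (NGu \ {u, v}).card + (NGv \ {u, v}).card := by
        refine (Finset.card_le_card coverG).trans ?_
        refine (card_union5 _ _ _ _ _).trans ?_
        simp [Finset.card_product]
      -- shrink corrections: the sdiffs lose at least one element
      have hshrink : ∀ (N : Finset V), v ∈ N → (N \ {u, v}).card + 1 ≤ N.card := by
        intro N hvN
        have h1 : (N \ {u, v}) ⊆ N.erase v := by
          intro x hx
          obtain ⟨hxN, hxuv⟩ := Finset.mem_sdiff.1 hx
          exact Finset.mem_erase.2 ⟨by simp at hxuv; exact hxuv.2, hxN⟩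
        have := Finset.card_le_card h1
        rw [Finset.card_erase_of_mem hvN] at this
        have : 1 ≤ N.card := Finset.card_pos.2 ⟨v, hvN⟩
        have := Finset.card_le_card h1
        rw [Finset.card_erase_of_mem hvN] at this
        omega
      have hshrink' : ∀ (N : Finset V), u ∈ N → (N \ {u, v}).card + 1 ≤ N.card := by
        intro N huN
        have h1 : (N \ {u, v}) ⊆ N.erase u := by
          intro x hx
          obtain ⟨hxN, hxuv⟩ := Finset.mem_sdiff.1 hx
          exact Finset.mem_erase.2 ⟨by simp at hxuv; exact hxuv.1, hxN⟩
        have h2 := Finset.card_le_card h1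
        rw [Finset.card_erase_of_mem huN] at h2
        have h3 : 1 ≤ N.card := Finset.card_pos.2 ⟨u, huN⟩
        omega
      have sA1 := hshrink NAu hvNAu
      have sA2 := hshrink' NAv huNAv
      have sG1 := hshrink NGu hvNGu
      have sG2 := hshrink' NGv huNGv
      -- disjointness bounds
      have hd1 : NAu.card + NGv.card ≤ S.card := disj_key G hA hpA S
      have hd2 : NAv.card + NGu.card ≤ S.card := by
        have huv' : s(v, u) ∈ A := by rwa [Sym2.eq_swap]
        exact disj_key G hA huv' S
      -- induction hypothesis
      have hIH := ih S' (by omega)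
      -- final arithmetic
      rw [hScard]
      rw [hScard] at hd1 hd2
      have hexp : (S'.card + 2) ^ 2 = S'.card ^ 2 + 4 * S'.card + 4 := by ring
      rw [hexp]
      rw [← hS'def] at *
      omega

/-- For every graph `G` on `n` vertices with `e` edges, `α₁(G) ≤ n²/2 - e`. -/
theorem alphaOne_le (G : SimpleGraph V) [DecidableRel G.Adj] :
    (alphaOne G : ℝ) ≤ (Fintype.card V : ℝ) ^ 2 / 2 - (G.edgeFinset.card : ℝ) := by
  classical
  -- the sup is attained
  have hne : {k | ∃ A : Finset (Sym2 V), IsTriangleIndep G A ∧ A.card = k}.Nonempty := by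
    refine ⟨0, ∅, ⟨by simp, fun a b c _ _ _ => by simp⟩, rfl⟩
  have hbdd : BddAbove {k | ∃ A : Finset (Sym2 V), IsTriangleIndep G A ∧ A.card = k} := by
    refine ⟨Fintype.card (Sym2 V), fun k hk => ?_⟩
    obtain ⟨A, _, rfl⟩ := hk
    exact Finset.card_le_univ A
  obtain ⟨A, hA, hAcard⟩ := Nat.sSup_mem hne hbdd
  -- key natural-number inequality
  have key := main_count G hA (Fintype.card V) Finset.univ (by simp)
  rw [Finset.card_univ] at key
  -- the ordered-pair counts equal twice the edge counts
  have hG2 : 2 * G.edgeFinset.card =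
      ((Finset.univ : Finset V).offDiag.filter fun p => G.Adj p.1 p.2).card := by
    rw [SimpleGraph.two_mul_card_edgeFinset]
    congr 1
    ext q
    simp only [Finset.mem_filter, Finset.mem_univ, true_and, Finset.mem_offDiag]
    exact ⟨fun h => ⟨h.ne, h⟩, fun h => h.2⟩
  have hA2 : 2 * A.card =
      ((Finset.univ : Finset V).offDiag.filter fun p => s(p.1, p.2) ∈ A).card := by
    set H := SimpleGraph.fromEdgeSet (A : Set (Sym2 V)) with hH
    haveI : DecidableRel H.Adj := fun a b => Classical.dec _
    have hedge : H.edgeSet = (A : Set (Sym2 V)) := by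
      rw [hH, SimpleGraph.edgeSet_fromEdgeSet]
      ext e
      simp only [Set.mem_diff, Set.mem_setOf_eq, and_iff_left_iff_imp]
      intro he
      exact SimpleGraph.not_isDiag_of_mem_edgeSet G (hA.1 he)
    have hef : H.edgeFinset = A := by
      ext e
      rw [SimpleGraph.mem_edgeFinset, hedge]
      exact Finset.mem_coe
    have h2m : 2 * #A = #(Finset.univ.filter fun (x, y) => H.Adj x y) := by
      rw [← hef]
      convert H.two_mul_card_edgeFinset using 3
      exact congrArg (fun i => @SimpleGraph.edgeFinset V H i) (Subsingleton.elim _ _)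
    rw [h2m]
    congr 1
    ext q
    simp only [Finset.mem_filter, Finset.mem_univ, true_and, Finset.mem_offDiag, hH,
      SimpleGraph.fromEdgeSet_adj, Finset.mem_coe]
    exact ⟨fun h => ⟨h.2, h.1⟩, fun h => ⟨h.2, h.1⟩⟩
  have keyN : 2 * A.card + 2 * G.edgeFinset.card ≤ (Fintype.card V) ^ 2 := by
    rw [hA2, hG2]; exact key
  have halpha : alphaOne G = A.card := by rw [alphaOne, ← hAcard]
  rw [halpha]
  have : (2 * (A.card : ℝ) + 2 * (G.edgeFinset.card : ℝ)) ≤ ((Fintype.card V : ℝ)) ^ 2 := by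
    exact_mod_cast keyN
  linarith
end
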